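/- arXiv:2012.08109 — 2 statements merged into one kernel-verified Lean document; each statement's English description precedes it below -/
import Mathlib

section
/- Let n ≥ 2 be an integer and θ ∈ (0,1). Then every cubature formula ν of strength 1 on S^{n-1} satisfies ‖ν‖_θ ≥ 2^{1−θ}, and ‖ν‖_θ = 2^{1−θ} holds if and only if ν = (δ_ξ + δ_{−ξ})/2 for some ξ ∈ S^{n-1}. -/
open MeasureTheory Metric
open scoped ENNReal

noncomputable section

abbrev Sph (n : ℕ) : Type := Metric.sphere (0 : EuclideanSpace ℝ (Fin n)) 1

def sphMap {n : ℕ} (U : EuclideanSpace ℝ (Fin n) ≃ₗᵢ[ℝ] EuclideanSpace ℝ (Fin n)) :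
    Sph n → Sph n := fun x =>
  ⟨U x, by
    have hx : ‖(x : EuclideanSpace ℝ (Fin n))‖ = 1 := mem_sphere_zero_iff_norm.mp x.2
    simpa [mem_sphere_zero_iff_norm] using hx⟩

lemma sphMap_continuous {n : ℕ}
    (U : EuclideanSpace ℝ (Fin n) ≃ₗᵢ[ℝ] EuclideanSpace ℝ (Fin n)) :
    Continuous (sphMap U) :=
  (U.continuous.comp continuous_subtype_val).subtype_mk _

def antipode {n : ℕ} : Sph n → Sph n := fun x =>
  ⟨-(x : EuclideanSpace ℝ (Fin n)), by
    have hx : ‖(x : EuclideanSpace ℝ (Fin n))‖ = 1 := mem_sphere_zero_iff_norm.mp x.2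
    simpa [mem_sphere_zero_iff_norm] using hx⟩

/-- `σ` is invariant under all orthogonal transformations of `ℝⁿ`. -/
def IsRotationInvariant {n : ℕ} (σ : Measure (Sph n)) : Prop :=
  ∀ U : EuclideanSpace ℝ (Fin n) ≃ₗᵢ[ℝ] EuclideanSpace ℝ (Fin n),
    Measure.map (sphMap U) σ = σ

/-- Evaluation of a polynomial on `ℝⁿ` at a point of the sphere. -/
def polyEval {n : ℕ} (p : MvPolynomial (Fin n) ℝ) (x : Sph n) : ℝ :=
  MvPolynomial.eval (fun i => (x : EuclideanSpace ℝ (Fin n)) i) p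

/-- `ν` is finitely supported. -/
def IsFinSupported {n : ℕ} (ν : Measure (Sph n)) : Prop :=
  ∃ s : Finset (Sph n), ν ((↑s : Set (Sph n))ᶜ) = 0

/-- `ν` is a cubature formula of strength `t` w.r.t. the reference measure `σ`. -/
def IsCubature {n : ℕ} (t : ℕ) (σ ν : Measure (Sph n)) : Prop :=
  IsProbabilityMeasure ν ∧ IsFinSupported ν ∧
    ∀ p : MvPolynomial (Fin n) ℝ, p.totalDegree ≤ t →
      ∫ x, polyEval p x ∂ν = ∫ x, polyEval p x ∂σ

/-- `‖ν‖_θ = ∑ νᵢ^θ`, the sum of the `θ`-th powers of the point masses of `ν`. -/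
def thetaNorm {n : ℕ} (ν : Measure (Sph n)) (θ : ℝ) : ℝ :=
  ∑' u : Sph n, (ν {u}).toReal ^ θ

/-!
Write `ν = ∑ wᵤ δᵤ` over its atoms. Strength 1 and the antipodal symmetry of `σ` give
`∑ wᵤ u = 0`, so `wᵤ = ‖∑_{v ≠ u} w_v v‖ ≤ 1 - wᵤ`, i.e. every atom has mass at most `1/2`.
For such weights `wᵤ^θ = wᵤ · wᵤ^(θ-1) ≥ wᵤ · 2^(1-θ)`, and summing gives `‖ν‖_θ ≥ 2^(1-θ)`.
Equality forces every atom to have mass exactly `1/2`, so there are two atoms, and the vanishing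
barycenter makes them antipodal.
-/

section Weights

lemma mul_rpow_one_sub_le_rpow {w m θ : ℝ} (hw : 0 ≤ w) (hwm : w ≤ m⁻¹) (hθ : θ ≤ 1) :
    w * m ^ (1 - θ) ≤ w ^ θ := by
  rcases hw.eq_or_lt with rfl | hw
  · simpa using Real.rpow_nonneg le_rfl θ
  have hm : 0 < m := inv_pos.1 (hw.trans_le hwm)
  calc w * m ^ (1 - θ) = w * m⁻¹ ^ (θ - 1) := by
        rw [Real.inv_rpow hm.le, ← Real.rpow_neg hm.le, neg_sub]
    _ ≤ w * w ^ (θ - 1) :=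
        mul_le_mul_of_nonneg_left (Real.rpow_le_rpow_of_nonpos hw hwm (by linarith)) hw.le
    _ = w ^ θ := by rw [mul_comm, ← Real.rpow_add_one hw.ne', sub_add_cancel]

lemma eq_inv_of_mul_rpow_one_sub_eq_rpow {w m θ : ℝ} (hw : 0 < w) (hm : 0 < m) (hθ : θ ≠ 1)
    (h : w * m ^ (1 - θ) = w ^ θ) : w = m⁻¹ := by
  have hpow : w ^ (θ - 1) = m⁻¹ ^ (θ - 1) := by
    rw [Real.inv_rpow hm.le, ← Real.rpow_neg hm.le, neg_sub]
    refine mul_left_cancel₀ hw.ne' ?_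
    rw [h, mul_comm, ← Real.rpow_add_one hw.ne', sub_add_cancel]
  exact (Real.rpow_left_inj hw.le (by positivity) (sub_ne_zero.2 hθ)).1 hpow

variable {ι : Type*} {s : Finset ι} {w : ι → ℝ} {m θ : ℝ}

lemma rpow_one_sub_le_sum_rpow (hw : ∀ i ∈ s, 0 ≤ w i) (hwm : ∀ i ∈ s, w i ≤ m⁻¹)
    (hsum : ∑ i ∈ s, w i = 1) (hθ : θ ≤ 1) :
    m ^ (1 - θ) ≤ ∑ i ∈ s, w i ^ θ :=
  calc m ^ (1 - θ) = ∑ i ∈ s, w i * m ^ (1 - θ) := by rw [← Finset.sum_mul, hsum, one_mul]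
    _ ≤ ∑ i ∈ s, w i ^ θ :=
        Finset.sum_le_sum fun i hi => mul_rpow_one_sub_le_rpow (hw i hi) (hwm i hi) hθ

lemma eq_inv_of_sum_rpow_eq_rpow_one_sub (hw : ∀ i ∈ s, 0 < w i) (hwm : ∀ i ∈ s, w i ≤ m⁻¹)
    (hsum : ∑ i ∈ s, w i = 1) (hθ : θ < 1) (heq : ∑ i ∈ s, w i ^ θ = m ^ (1 - θ)) :
    ∀ i ∈ s, w i = m⁻¹ := by
  have hle : ∀ i ∈ s, w i * m ^ (1 - θ) ≤ w i ^ θ := fun i hi =>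
    mul_rpow_one_sub_le_rpow (hw i hi).le (hwm i hi) hθ.le
  have hsums : ∑ i ∈ s, w i * m ^ (1 - θ) = ∑ i ∈ s, w i ^ θ := by
    rw [← Finset.sum_mul, hsum, one_mul, heq]
  intro i hi
  have hm : 0 < m := inv_pos.1 ((hw i hi).trans_le (hwm i hi))
  exact eq_inv_of_mul_rpow_one_sub_eq_rpow (hw i hi) hm hθ.ne
    ((Finset.sum_eq_sum_iff_of_le hle).1 hsums i hi)

lemma le_half_of_sum_smul_eq_zero {E : Type*} [SeminormedAddCommGroup E] [NormedSpace ℝ E]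
    {x : ι → E} (hw : ∀ i ∈ s, 0 ≤ w i) (hx : ∀ i ∈ s, ‖x i‖ = 1) (hsum : ∑ i ∈ s, w i = 1)
    (hbar : ∑ i ∈ s, w i • x i = 0) {j : ι} (hj : j ∈ s) : w j ≤ 2⁻¹ := by
  classical
  have hnorm : ∀ i ∈ s, ‖w i • x i‖ = w i := fun i hi => by
    rw [norm_smul, hx i hi, mul_one, Real.norm_of_nonneg (hw i hi)]
  have hrest : w j • x j = -∑ i ∈ s.erase j, w i • x i :=
    eq_neg_of_add_eq_zero_left ((Finset.add_sum_erase s _ hj).trans hbar)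
  have : w j ≤ 1 - w j :=
    calc w j = ‖∑ i ∈ s.erase j, w i • x i‖ := by rw [← hnorm j hj, hrest, norm_neg]
      _ ≤ ∑ i ∈ s.erase j, ‖w i • x i‖ := norm_sum_le _ _
      _ = ∑ i ∈ s.erase j, w i :=
          Finset.sum_congr rfl fun i hi => hnorm i (Finset.mem_of_mem_erase hi)
      _ = 1 - w j := by rw [← hsum, ← Finset.add_sum_erase s w hj, add_sub_cancel_left]
  linarith

end Weights

section FinitelySupported

variable {α : Type*} [MeasurableSpace α] {μ : Measure α} {s : Finset α}

lemma exists_finset_compl_null_singleton_ne_zero (hs : μ (↑s)ᶜ = 0) :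
    ∃ t : Finset α, μ (↑t)ᶜ = 0 ∧ ∀ u ∈ t, μ {u} ≠ 0 := by
  classical
  refine ⟨s.filter (μ {·} ≠ 0), ?_, fun u hu => (Finset.mem_filter.1 hu).2⟩
  have hnull : μ ↑(s.filter (μ {·} = 0)) = 0 :=
    (measure_null_iff_singleton (Finset.countable_toSet _)).2 fun u hu =>
      (Finset.mem_filter.1 hu).2
  refine measure_mono_null (fun x hx => ?_) (measure_union_null hs hnull)
  by_cases hxs : x ∈ s <;> simp_all

lemma eq_sum_smul_dirac_of_measure_compl_eq_zero [MeasurableSingletonClass α]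
    (hs : μ (↑s)ᶜ = 0) : μ = ∑ u ∈ s, μ {u} • Measure.dirac u := by
  calc μ = μ.restrict (⋃ u ∈ s, {u}) := by
        rw [show (⋃ u ∈ s, {u} : Set α) = s from Set.biUnion_of_singleton _,
          Measure.restrict_eq_self_of_ae_mem (ae_iff.2 hs)]
    _ = Measure.sum fun u : s => μ.restrict {(u : α)} :=
        Measure.restrict_biUnion_finset (fun u _ v _ huv => Set.disjoint_singleton.2 huv)
          fun u => measurableSet_singleton u
    _ = ∑ u ∈ s, μ {u} • Measure.dirac u := by
        simp only [Measure.restrict_singleton, Measure.sum_fintype]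
        exact Finset.sum_coe_sort s fun u => μ {u} • Measure.dirac u

lemma integral_eq_sum_of_measure_compl_eq_zero [MeasurableSingletonClass α] [IsFiniteMeasure μ]
    {E : Type*} [NormedAddCommGroup E] [NormedSpace ℝ E] [CompleteSpace E] (hs : μ (↑s)ᶜ = 0)
    (f : α → E) : ∫ x, f x ∂μ = ∑ u ∈ s, μ.real {u} • f u := by
  have hf : IntegrableOn f s μ := by
    rw [← Set.biUnion_of_singleton (s : Set α)]
    exact (integrableOn_finite_biUnion s.finite_toSet).2 fun u _ => integrableOn_singleton
  rw [← setIntegral_finset s hf, Measure.restrict_eq_self_of_ae_mem (ae_iff.2 hs)]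

lemma sum_measureReal_singleton_eq_one [MeasurableSingletonClass α] [IsProbabilityMeasure μ]
    (hs : μ (↑s)ᶜ = 0) : ∑ u ∈ s, μ.real {u} = 1 := by
  rw [sum_measureReal_singleton, measureReal_def,
    (prob_compl_eq_zero_iff s.finite_toSet.measurableSet).1 hs, ENNReal.toReal_one]

end FinitelySupported

section Sphere

variable {n : ℕ}

lemma antipode_ne_self (ξ : Sph n) : antipode ξ ≠ ξ := by
  intro h
  have h' : -(ξ : EuclideanSpace ℝ (Fin n)) = ξ := congrArg Subtype.val h
  have hξ : (ξ : EuclideanSpace ℝ (Fin n)) = 0 :=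
    (smul_eq_zero.1 ((two_smul ℝ _).trans (neg_eq_iff_add_eq_zero.1 h'))).resolve_left
      two_ne_zero
  simpa [hξ] using norm_eq_of_mem_sphere ξ

lemma IsRotationInvariant.integral_coord_eq_zero {σ : Measure (Sph n)}
    (hσ : IsRotationInvariant σ) (i : Fin n) :
    ∫ x : Sph n, (x : EuclideanSpace ℝ (Fin n)) i ∂σ = 0 := by
  set U := LinearIsometryEquiv.neg ℝ (E := EuclideanSpace ℝ (Fin n))
  have hcont : Continuous fun x : Sph n => (x : EuclideanSpace ℝ (Fin n)) i :=
    (EuclideanSpace.proj i).continuous.comp continuous_subtype_val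
  have hodd : ∫ x : Sph n, (x : EuclideanSpace ℝ (Fin n)) i ∂σ
      = -∫ x : Sph n, (x : EuclideanSpace ℝ (Fin n)) i ∂σ :=
    calc ∫ x : Sph n, (x : EuclideanSpace ℝ (Fin n)) i ∂σ
        = ∫ x : Sph n, (x : EuclideanSpace ℝ (Fin n)) i ∂(σ.map (sphMap U)) := by rw [hσ U]
      _ = ∫ x : Sph n, (sphMap U x : EuclideanSpace ℝ (Fin n)) i ∂σ :=
          integral_map (sphMap_continuous U).aemeasurable hcont.aestronglyMeasurable
      _ = -∫ x : Sph n, (x : EuclideanSpace ℝ (Fin n)) i ∂σ := by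
          simp [sphMap, U, integral_neg]
  linarith

lemma IsCubature.sum_smul_eq_zero {t : ℕ} {σ ν : Measure (Sph n)} (hν : IsCubature t σ ν)
    (ht : 1 ≤ t) (hσ : IsRotationInvariant σ) {s : Finset (Sph n)} (hs : ν (↑s)ᶜ = 0) :
    ∑ u ∈ s, ν.real {u} • (u : EuclideanSpace ℝ (Fin n)) = 0 := by
  obtain ⟨hprob, -, hcub⟩ := hν
  ext i
  have hX := hcub (MvPolynomial.X i) (by simpa using ht)
  simp only [polyEval, MvPolynomial.eval_X] at hX
  rw [hσ.integral_coord_eq_zero, integral_eq_sum_of_measure_compl_eq_zero hs] at hX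
  simpa using hX

lemma thetaNorm_eq_sum {ν : Measure (Sph n)} {s : Finset (Sph n)} (hs : ν (↑s)ᶜ = 0) {θ : ℝ}
    (hθ : θ ≠ 0) : thetaNorm ν θ = ∑ u ∈ s, ν.real {u} ^ θ :=
  tsum_eq_sum fun u hu => by
    rw [measure_mono_null (Set.singleton_subset_iff.2 (by simpa using hu)) hs,
      ENNReal.toReal_zero, Real.zero_rpow hθ]

lemma thetaNorm_half_smul_dirac_add_dirac_antipode (ξ : Sph n) {θ : ℝ} (hθ : θ ≠ 0) :
    thetaNorm ((2 : ℝ≥0∞)⁻¹ • (Measure.dirac ξ + Measure.dirac (antipode ξ))) θ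
      = 2 ^ (1 - θ) := by
  have hne := antipode_ne_self ξ
  have hs : ((2 : ℝ≥0∞)⁻¹ • (Measure.dirac ξ + Measure.dirac (antipode ξ)))
      (↑({ξ, antipode ξ} : Finset (Sph n)))ᶜ = 0 := by simp
  rw [thetaNorm_eq_sum hs hθ, Finset.sum_pair hne.symm]
  simp only [smul_add, measureReal_def, Measure.coe_add, Measure.coe_smul, Pi.add_apply,
    Pi.smul_apply, MeasurableSet.singleton, Measure.dirac_apply', Set.mem_singleton_iff,
    Set.indicator_of_mem, Pi.one_apply, smul_eq_mul, mul_one, hne, not_false_eq_true,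
    Set.indicator_of_notMem, mul_zero, add_zero, ENNReal.toReal_inv, ENNReal.toReal_ofNat,
    hne.symm, zero_add]
  rw [Real.inv_rpow two_pos.le, Real.rpow_sub two_pos, Real.rpow_one]
  ring

lemma exists_eq_half_smul_dirac_add_dirac_antipode {ν : Measure (Sph n)}
    [IsProbabilityMeasure ν] {s : Finset (Sph n)} (hs : ν (↑s)ᶜ = 0)
    (hhalf : ∀ u ∈ s, ν.real {u} = 2⁻¹)
    (hbar : ∑ u ∈ s, ν.real {u} • (u : EuclideanSpace ℝ (Fin n)) = 0) :
    ∃ ξ : Sph n, ν = (2 : ℝ≥0∞)⁻¹ • (Measure.dirac ξ + Measure.dirac (antipode ξ)) := by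
  have hcard : s.card = 2 := by
    have h := sum_measureReal_singleton_eq_one hs
    rw [Finset.sum_congr rfl hhalf, Finset.sum_const, nsmul_eq_mul] at h
    exact_mod_cast (by linarith : (s.card : ℝ) = 2)
  obtain ⟨a, b, hab, rfl⟩ := Finset.card_eq_two.1 hcard
  have hmass : ∀ u ∈ ({a, b} : Finset (Sph n)), ν {u} = 2⁻¹ := fun u hu => by
    rw [← ofReal_measureReal, hhalf u hu, ENNReal.ofReal_inv_of_pos two_pos, ENNReal.ofReal_ofNat]
  have hb : b = antipode a := by
    rw [Finset.sum_pair hab, hhalf a (by simp), hhalf b (by simp), ← smul_add, smul_eq_zero]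
      at hbar
    exact Subtype.ext (eq_neg_of_add_eq_zero_right (hbar.resolve_left (by norm_num)))
  refine ⟨a, ?_⟩
  rw [eq_sum_smul_dirac_of_measure_compl_eq_zero hs, Finset.sum_pair hab, hmass a (by simp),
    hmass b (by simp), hb, smul_add]

end Sphere

theorem stmt15_general (n : ℕ)
    (σ : Measure (Sph n)) (hσ : IsRotationInvariant σ)
    (ν : Measure (Sph n)) (hν : IsCubature 1 σ ν)
    (θ : ℝ) (hθ : θ ∈ Set.Ioo (0 : ℝ) 1) :
    (2 : ℝ) ^ (1 - θ) ≤ thetaNorm ν θ ∧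
      (thetaNorm ν θ = (2 : ℝ) ^ (1 - θ) ↔
        ∃ ξ : Sph n, ν = (2 : ℝ≥0∞)⁻¹ • (Measure.dirac ξ + Measure.dirac (antipode ξ))) := by
  obtain ⟨hθ0, hθ1⟩ := hθ
  have := hν.1
  obtain ⟨s₀, hs₀⟩ := hν.2.1
  obtain ⟨s, hs, hatom⟩ := exists_finset_compl_null_singleton_ne_zero hs₀
  have hw : ∀ u ∈ s, 0 < ν.real {u} := fun u hu =>
    ENNReal.toReal_pos (hatom u hu) (by finiteness)
  have hsum := sum_measureReal_singleton_eq_one hs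
  have hbar := hν.sum_smul_eq_zero le_rfl hσ hs
  have hhalf : ∀ u ∈ s, ν.real {u} ≤ 2⁻¹ := fun u hu =>
    le_half_of_sum_smul_eq_zero (fun v hv => (hw v hv).le) (fun v _ => norm_eq_of_mem_sphere v)
      hsum hbar hu
  have hnorm := thetaNorm_eq_sum hs hθ0.ne'
  refine ⟨hnorm ▸ rpow_one_sub_le_sum_rpow (fun u hu => (hw u hu).le) hhalf hsum hθ1.le,
    fun heq => ?_, ?_⟩
  · exact exists_eq_half_smul_dirac_add_dirac_antipode hs
      (eq_inv_of_sum_rpow_eq_rpow_one_sub hw hhalf hsum hθ1 (hnorm ▸ heq)) hbar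
  · rintro ⟨ξ, rfl⟩
    exact thetaNorm_half_smul_dirac_add_dirac_antipode ξ hθ0.ne'

theorem stmt15 (n : ℕ) (hn : 2 ≤ n)
    (σ : Measure (Sph n)) [IsProbabilityMeasure σ] (hσ : IsRotationInvariant σ)
    (ν : Measure (Sph n)) (hν : IsCubature 1 σ ν)
    (θ : ℝ) (hθ : θ ∈ Set.Ioo (0 : ℝ) 1) :
    (2 : ℝ) ^ (1 - θ) ≤ thetaNorm ν θ ∧
      (thetaNorm ν θ = (2 : ℝ) ^ (1 - θ) ↔
        ∃ ξ : Sph n, ν = (2 : ℝ≥0∞)⁻¹ • (Measure.dirac ξ + Measure.dirac (antipode ξ))) :=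
  stmt15_general n σ hσ ν hν θ hθ
end
end

section
/- Let n ≥ 2 and t ≥ 1 be integers. Then every cubature formula of strength 2t on S^{n-1} is supported on at least C(n+t-1, n-1) + C(n+t-2, n-1) points, and every cubature formula of strength 2t+1 on S^{n-1} is supported on at least 2·C(n+t-1, n-1) points, where C(a,b) denotes the binomial coefficient. -/
/-! Let `X` be the support of `ν` and `Hom_k` the space of homogeneous polynomials of degree `k`,
of dimension `C(n+k-1, k)`. For a homogeneous `m` of degree `c` not vanishing on `X`, with
`a + c + b` odd and all degrees within the strength, the map `(p, q) ↦ (p - m q)|_X` is injective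
on `Hom_a × Hom_b`: if `p = m q` on `X`, then `∫ p² dσ = ∫ p² dν = ∫ p m q dν = ∫ p m q dσ = 0`,
the last integral vanishing because `p m q` is odd. As a rotation-invariant measure charges every
open set, `p` vanishes on the sphere, hence `p = 0` by homogeneity, and then likewise `q = 0`.
Strength `2t` uses `m = 1`, `a = t`, `b = t - 1`; strength `2t + 1` uses a linear form `m` not
vanishing on `X` and `a = b = t`. -/

open MeasureTheory Metric
open scoped ENNReal

noncomputable section

open MvPolynomial Module

theorem MvPolynomial.IsHomogeneous.eval_smul {R σ : Type*} [CommSemiring R]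
    {φ : MvPolynomial σ R} {m : ℕ} (hφ : φ.IsHomogeneous m) (c : R) (v : σ → R) :
    eval (c • v) φ = c ^ m * eval v φ := by
  rw [eval_eq, eval_eq, Finset.mul_sum]
  refine Finset.sum_congr rfl fun d hd => ?_
  have hdeg : ∑ i ∈ d.support, d i = m := by
    rw [← hφ (mem_support_iff.mp hd), Finsupp.weight_apply, Finsupp.sum]
    simp
  simp_rw [Pi.smul_apply, smul_eq_mul, mul_pow, Finset.prod_mul_distrib,
    Finset.prod_pow_eq_pow_sum, hdeg]
  ring

theorem Finsupp.setOf_degree_eq (σ : Type*) [Fintype σ] [DecidableEq σ] (k : ℕ) :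
    {d : σ →₀ ℕ | d.degree = k} = ↑(Finset.univ.finsuppAntidiag k : Finset (σ →₀ ℕ)) := by
  ext d
  simp [Finset.mem_finsuppAntidiag, Finsupp.degree_eq_sum]

instance MvPolynomial.finite_homogeneousSubmodule (σ R : Type*) [Finite σ] [CommSemiring R]
    (k : ℕ) : Module.Finite R (homogeneousSubmodule σ R k) := by
  classical
  have := Fintype.ofFinite σ
  have : Finite {d : σ →₀ ℕ | d.degree = k} := by
    rw [Finsupp.setOf_degree_eq]; infer_instance
  rw [homogeneousSubmodule_eq_finsupp_supported]
  exact Module.Finite.of_basis (basisRestrictSupport R _)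

theorem MvPolynomial.finrank_homogeneousSubmodule (σ R : Type*) [Fintype σ] [CommRing R]
    [Nontrivial R] (k : ℕ) :
    finrank R (homogeneousSubmodule σ R k) = (Fintype.card σ + k - 1).choose k := by
  classical
  rw [homogeneousSubmodule_eq_finsupp_supported]
  refine (finrank_eq_nat_card_basis (basisRestrictSupport R _)).trans ?_
  rw [Finsupp.setOf_degree_eq, Nat.card_coe_set_eq, Set.ncard_coe_finset,
    Finset.card_finsuppAntidiag_nat_eq_choose, Finset.card_univ]

variable {n : ℕ}

theorem continuous_polyEval (p : MvPolynomial (Fin n) ℝ) : Continuous (polyEval p) :=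
  (continuous_eval p).comp (continuous_pi fun i =>
    (PiLp.continuous_apply 2 _ i).comp continuous_subtype_val)

theorem polyEval_mul (p q : MvPolynomial (Fin n) ℝ) (x : Sph n) :
    polyEval (p * q) x = polyEval p x * polyEval q x := by
  simp [polyEval]

theorem exists_eq_smul_mem_sphere {E : Type*} [NormedAddCommGroup E] [NormedSpace ℝ E]
    (hE : (sphere (0 : E) 1).Nonempty) (w : E) : ∃ c : ℝ, ∃ x ∈ sphere (0 : E) 1, w = c • x := by
  rcases eq_or_ne w 0 with rfl | hw
  · obtain ⟨x, hx⟩ := hE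
    exact ⟨0, x, hx, (zero_smul ℝ x).symm⟩
  · refine ⟨‖w‖, ‖w‖⁻¹ • w, ?_, ?_⟩
    · simp [norm_smul, hw]
    · rw [smul_inv_smul₀ (norm_ne_zero_iff.mpr hw)]

theorem MvPolynomial.IsHomogeneous.eq_zero_of_polyEval_eq_zero [Nonempty (Sph n)]
    {p : MvPolynomial (Fin n) ℝ} {k : ℕ} (hp : p.IsHomogeneous k)
    (h : ∀ x, polyEval p x = 0) : p = 0 := by
  refine MvPolynomial.funext fun v => ?_
  obtain ⟨c, x, hx, hv⟩ := exists_eq_smul_mem_sphere (E := EuclideanSpace ℝ (Fin n))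
    ⟨_, (Classical.arbitrary (Sph n)).2⟩ (WithLp.toLp 2 v)
  have hv' : v = c • fun i => x i := _root_.funext fun i => congrArg (· i) hv
  rw [hv', hp.eval_smul, map_zero]
  exact mul_eq_zero_of_right _ (h ⟨x, hx⟩)

theorem exists_sphMap_apply_eq (x y : Sph n) : ∃ U, sphMap U x = y :=
  ⟨(ℝ ∙ ((x : EuclideanSpace ℝ (Fin n)) - y))ᗮ.reflection,
    Subtype.ext (Submodule.reflection_sub (by simp [norm_eq_of_mem_sphere]))⟩

theorem IsRotationInvariant.measure_preimage_sphMap {σ : Measure (Sph n)}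
    (hσ : IsRotationInvariant σ) (U : EuclideanSpace ℝ (Fin n) ≃ₗᵢ[ℝ] EuclideanSpace ℝ (Fin n))
    {s : Set (Sph n)} (hs : MeasurableSet s) : σ (sphMap U ⁻¹' s) = σ s := by
  rw [← Measure.map_apply (sphMap_continuous U).measurable hs, hσ U]

theorem IsRotationInvariant.isOpenPosMeasure {σ : Measure (Sph n)} [NeZero σ]
    (hσ : IsRotationInvariant σ) : σ.IsOpenPosMeasure := by
  refine ⟨fun O hO ⟨x₀, hx₀⟩ hO0 => NeZero.ne σ ?_⟩
  choose U hU using fun y => exists_sphMap_apply_eq y x₀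
  obtain ⟨s, hs⟩ := isCompact_univ.elim_finite_subcover (fun y => sphMap (U y) ⁻¹' O)
    (fun y => hO.preimage (sphMap_continuous _))
    (fun y _ => Set.mem_iUnion.mpr ⟨y, by simp [hU, hx₀]⟩)
  rw [← Measure.measure_univ_eq_zero]
  refine measure_mono_null hs ((measure_biUnion_null_iff s.countable_toSet).mpr fun y _ => ?_)
  rwa [hσ.measure_preimage_sphMap _ hO.measurableSet]

theorem IsRotationInvariant.integral_polyEval_eq_zero_of_odd {σ : Measure (Sph n)}
    (hσ : IsRotationInvariant σ) {p : MvPolynomial (Fin n) ℝ} {k : ℕ}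
    (hp : p.IsHomogeneous k) (hk : Odd k) : ∫ x, polyEval p x ∂σ = 0 := by
  let U : EuclideanSpace ℝ (Fin n) ≃ₗᵢ[ℝ] EuclideanSpace ℝ (Fin n) := .neg ℝ
  have hneg : ∀ x, polyEval p (sphMap U x) = -polyEval p x := fun x => by
    have : (fun i => (sphMap U x : EuclideanSpace ℝ (Fin n)) i) =
        (-1 : ℝ) • fun i => (x : EuclideanSpace ℝ (Fin n)) i := by
      ext i; simp [sphMap, U]
    rw [polyEval, this, hp.eval_smul, hk.neg_one_pow, neg_one_mul, polyEval]
  have h := integral_map (sphMap_continuous U).measurable.aemeasurable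
    (continuous_polyEval p).aestronglyMeasurable (μ := σ)
  rw [hσ U] at h
  simp only [hneg, integral_neg] at h
  linarith

theorem IsFinSupported.finite_atoms {ν : Measure (Sph n)} (hν : IsFinSupported ν) :
    {u : Sph n | ν {u} ≠ 0}.Finite := by
  obtain ⟨s, hs⟩ := hν
  refine s.finite_toSet.subset fun u hu => ?_
  by_contra hus
  exact hu (measure_mono_null (Set.singleton_subset_iff.mpr hus) hs)

theorem IsFinSupported.ae_ne_zero {ν : Measure (Sph n)} (hν : IsFinSupported ν) :
    ∀ᵐ u ∂ν, ν {u} ≠ 0 := by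
  obtain ⟨s, hs⟩ := hν
  rw [ae_iff]
  simp only [ne_eq, not_not]
  have hnull : ν (↑s ∩ {u | ν {u} = 0}) = 0 :=
    (measure_null_iff_singleton (s.countable_toSet.mono Set.inter_subset_left)).mpr
      fun u hu => hu.2
  refine measure_mono_null (fun u hu => ?_) (measure_union_null hs hnull)
  by_cases hus : u ∈ s
  · exact Or.inr ⟨hus, hu⟩
  · exact Or.inl hus

theorem IsCubature.polyEval_eq_zero_of_eqOn_atoms {τ : ℕ} {σ ν : Measure (Sph n)}
    [IsProbabilityMeasure σ] (hσ : IsRotationInvariant σ) (hν : IsCubature τ σ ν)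
    {p q : MvPolynomial (Fin n) ℝ} (hp : 2 * p.totalDegree ≤ τ)
    (hpq : p.totalDegree + q.totalDegree ≤ τ) (hσpq : ∫ x, polyEval (p * q) x ∂σ = 0)
    (heq : ∀ u, ν {u} ≠ 0 → polyEval p u = polyEval q u) (x : Sph n) : polyEval p x = 0 := by
  obtain ⟨-, hfin, hexact⟩ := hν
  have hνpp : ∫ u, polyEval (p * p) u ∂ν = ∫ u, polyEval (p * q) u ∂ν :=
    integral_congr_ae (hfin.ae_ne_zero.mono fun u hu => by simp only [polyEval_mul, heq u hu])
  have hσpp : ∫ u, polyEval (p * p) u ∂σ = 0 := by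
    rw [← hexact _ ((totalDegree_mul p p).trans (by omega)), hνpp,
      hexact _ ((totalDegree_mul p q).trans hpq), hσpq]
  have := hσ.isOpenPosMeasure
  have hpp : polyEval (p * p) = 0 := by
    refine ((continuous_polyEval _).ae_eq_iff_eq σ continuous_zero).mp
      ((integral_eq_zero_iff_of_nonneg (fun u => ?_) ?_).mp hσpp)
    · simpa [polyEval_mul] using mul_self_nonneg (polyEval p u)
    · exact (continuous_polyEval _).integrable_of_hasCompactSupport
        (HasCompactSupport.of_compactSpace _)
  simpa [polyEval_mul] using congrFun hpp x

theorem IsCubature.eq_zero_of_eqOn_atoms {τ a : ℕ} {σ ν : Measure (Sph n)}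
    [IsProbabilityMeasure σ] (hσ : IsRotationInvariant σ) (hν : IsCubature τ σ ν)
    {p q : MvPolynomial (Fin n) ℝ} (hp : p.IsHomogeneous a) (ha : 2 * a ≤ τ)
    (hq : a + q.totalDegree ≤ τ) (hσpq : ∫ x, polyEval (p * q) x ∂σ = 0)
    (heq : ∀ u, ν {u} ≠ 0 → polyEval p u = polyEval q u) : p = 0 :=
  have := nonempty_of_isProbabilityMeasure σ
  hp.eq_zero_of_polyEval_eq_zero (hν.polyEval_eq_zero_of_eqOn_atoms hσ
    (by linarith [hp.totalDegree_le]) (by linarith [hp.totalDegree_le]) hσpq heq)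

def polyEvalOn (s : Set (Sph n)) : MvPolynomial (Fin n) ℝ →ₗ[ℝ] (s → ℝ) where
  toFun p u := polyEval p u
  map_add' p q := by ext; simp [polyEval]
  map_smul' c p := by ext; simp [polyEval]

theorem IsCubature.choose_add_choose_le_ncard_atoms {τ a b c : ℕ} {σ ν : Measure (Sph n)}
    [IsProbabilityMeasure σ] (hσ : IsRotationInvariant σ) (hν : IsCubature τ σ ν)
    {m : MvPolynomial (Fin n) ℝ} (hm : m.IsHomogeneous c)
    (hm0 : ∀ u, ν {u} ≠ 0 → polyEval m u ≠ 0) (hodd : Odd (a + (c + b)))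
    (ha : 2 * a ≤ τ) (hb : 2 * b ≤ τ) (habc : a + (c + b) ≤ τ) :
    (n + a - 1).choose a + (n + b - 1).choose b ≤ {u : Sph n | ν {u} ≠ 0}.ncard := by
  have := hν.2.1.finite_atoms.fintype
  let L : homogeneousSubmodule (Fin n) ℝ a × homogeneousSubmodule (Fin n) ℝ b →ₗ[ℝ]
      ({u : Sph n | ν {u} ≠ 0} → ℝ) :=
    polyEvalOn _ ∘ₗ (Submodule.subtype _).coprod (-(LinearMap.mulLeft ℝ m ∘ₗ Submodule.subtype _))
  have hL : Function.Injective L := by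
    refine (injective_iff_map_eq_zero L).mpr fun ⟨⟨p, hp⟩, ⟨q, hq⟩⟩ hpq => ?_
    have hpq' : ∀ u, ν {u} ≠ 0 → polyEval p u = polyEval (m * q) u := fun u hu => by
      rw [← sub_eq_zero]
      simpa [L, polyEvalOn, polyEval, sub_eq_add_neg] using congrFun hpq ⟨u, hu⟩
    have hp0 : p = 0 := hν.eq_zero_of_eqOn_atoms hσ hp ha
      (by linarith [(totalDegree_mul m q), hm.totalDegree_le, hq.totalDegree_le])
      (hσ.integral_polyEval_eq_zero_of_odd (hp.mul (hm.mul hq)) hodd) hpq'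
    have hq0 : q = 0 := hν.eq_zero_of_eqOn_atoms hσ (q := 0) hq hb (by simp; omega)
      (by simp [polyEval]) fun u hu => by
        have hmq : polyEval m u * polyEval q u = 0 := by
          rw [← polyEval_mul, ← hpq' u hu, hp0]; simp [polyEval]
        rw [(mul_eq_zero.mp hmq).resolve_left (hm0 u hu)]; simp [polyEval]
    simp [hp0, hq0]
  have hcard := LinearMap.finrank_le_finrank_of_injective hL
  rwa [Module.finrank_prod, finrank_homogeneousSubmodule, finrank_homogeneousSubmodule,
    Module.finrank_fintype_fun_eq_card, Fintype.card_fin, ← Nat.card_eq_fintype_card,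
    Nat.card_coe_set_eq] at hcard

theorem exists_isHomogeneous_one_polyEval_ne_zero {s : Set (Sph n)} (hs : s.Finite) :
    ∃ ℓ : MvPolynomial (Fin n) ℝ, ℓ.IsHomogeneous 1 ∧ ∀ u ∈ s, polyEval ℓ u ≠ 0 := by
  have := hs.to_subtype
  obtain ⟨ξ, hξ⟩ : ∃ ξ : EuclideanSpace ℝ (Fin n),
      ∀ u ∈ s, inner ℝ (u : EuclideanSpace ℝ (Fin n)) ξ ≠ 0 := by
    by_contra! h
    obtain ⟨u, hu⟩ := Subspace.exists_eq_top_of_iUnion_eq_univ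
      (p := fun u : s => (ℝ ∙ ((u : Sph n) : EuclideanSpace ℝ (Fin n)))ᗮ)
      (Set.eq_univ_of_forall fun ξ => by
        obtain ⟨u, hus, hu⟩ := h ξ
        exact Set.mem_iUnion.mpr
          ⟨⟨u, hus⟩, Submodule.mem_orthogonal_singleton_iff_inner_right.mpr hu⟩)
    rw [Submodule.orthogonal_eq_top_iff, Submodule.span_singleton_eq_bot] at hu
    simpa [hu] using (u : Sph n).2
  refine ⟨∑ i, C (ξ i) * X i, IsHomogeneous.sum _ _ _ fun i _ => (isHomogeneous_X ℝ i).C_mul _,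
    fun u hu => ?_⟩
  convert hξ u hu using 1
  simp [polyEval, PiLp.inner_apply, mul_comm]

theorem stmt16 (n t : ℕ) (hn : 2 ≤ n) (ht : 1 ≤ t)
    (σ : Measure (Sph n)) [IsProbabilityMeasure σ] (hσ : IsRotationInvariant σ) :
    (∀ ν : Measure (Sph n), IsCubature (2 * t) σ ν →
      (n + t - 1).choose (n - 1) + (n + t - 2).choose (n - 1) ≤
        {u : Sph n | ν {u} ≠ 0}.ncard) ∧
    (∀ ν : Measure (Sph n), IsCubature (2 * t + 1) σ ν →
      2 * (n + t - 1).choose (n - 1) ≤ {u : Sph n | ν {u} ≠ 0}.ncard) := by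
  have hsymm : ∀ k, (n + k - 1).choose k = (n + k - 1).choose (n - 1) := fun k => by
    rw [show n + k - 1 = (n - 1) + k by omega, Nat.choose_symm_add]
  refine ⟨fun ν hν => ?_, fun ν hν => ?_⟩
  · have h := hν.choose_add_choose_le_ncard_atoms hσ (a := t) (b := t - 1) (isHomogeneous_one _ _)
      (fun u _ => by simp [polyEval]) ⟨t - 1, by omega⟩ (by omega) (by omega) (by omega)
    rwa [hsymm, hsymm, show n + (t - 1) - 1 = n + t - 2 by omega] at h
  · obtain ⟨ℓ, hℓ, hℓ0⟩ := exists_isHomogeneous_one_polyEval_ne_zero hν.2.1.finite_atoms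
    have h := hν.choose_add_choose_le_ncard_atoms hσ (a := t) (b := t) hℓ hℓ0 ⟨t, by omega⟩
      (by omega) (by omega) (by omega)
    rwa [hsymm, ← two_mul] at h
end
end
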